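/- arXiv:1809.08587 — 5 statements merged into one kernel-verified Lean document; each statement's English description precedes it below -/
import Mathlib

section
/- Let α, β, δ > 0 and let w, v ∈ ℝ^{k-1} be vectors such that for all i, v_i ≥ w_i ≥ 0, ∏_i w_i ≤ α, min_i w_i ≥ δ, and ∏_i v_i > β. Then the Euclidean distance ‖v − w‖ > (δ/√(k−1)) · log(β/α). -/
open Finset

/-- Let `α, β, δ > 0` and `w, v ∈ ℝ^(k-1)` (as Euclidean space, `k ≥ 2`) such that
`v_i ≥ w_i ≥ 0` for all `i`, `∏_i w_i ≤ α`, `min_i w_i ≥ δ`, and `∏_i v_i > β`.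
Then `‖v − w‖ > (δ / √(k−1)) · log (β / α)`. -/
theorem stmt_6 (k : ℕ) (hk : 2 ≤ k) (α β δ : ℝ) (hα : 0 < α) (hβ : 0 < β) (hδ : 0 < δ)
    (w v : EuclideanSpace ℝ (Fin (k - 1)))
    (hvw : ∀ i, w i ≤ v i) (hw0 : ∀ i, 0 ≤ w i)
    (hwprod : ∏ i, w i ≤ α) (hwmin : ∀ i, δ ≤ w i)
    (hvprod : β < ∏ i, v i) :
    (δ / Real.sqrt ((k : ℝ) - 1)) * Real.log (β / α) < ‖v - w‖ := by
  have hn1 : 1 ≤ k - 1 := by omega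
  have hkn : (k : ℝ) - 1 = ((k - 1 : ℕ) : ℝ) := by
    have : k = (k - 1) + 1 := by omega
    rw [this]; push_cast; ring
  have hnpos : (0 : ℝ) < ((k - 1 : ℕ) : ℝ) := by exact_mod_cast hn1
  have hsq : (0 : ℝ) < Real.sqrt ((k:ℝ) - 1) := by
    rw [hkn]; exact Real.sqrt_pos.mpr hnpos
  have hwpos : ∀ i, 0 < w i := fun i => lt_of_lt_of_le hδ (hwmin i)
  have hvpos : ∀ i, 0 < v i := fun i => lt_of_lt_of_le (hwpos i) (hvw i)
  -- step 1 : δ * log (β/α) < ∑ (v i - w i)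
  have hlog : Real.log (β / α) < Real.log (∏ i, v i) - Real.log (∏ i, w i) := by
    rw [Real.log_div (ne_of_gt hβ) (ne_of_gt hα)]
    have h1 : Real.log β < Real.log (∏ i, v i) := Real.log_lt_log hβ hvprod
    have h2 : Real.log (∏ i, w i) ≤ Real.log α := by
      apply Real.log_le_log _ hwprod
      exact Finset.prod_pos fun i _ => hwpos i
    linarith
  have hsum : Real.log (∏ i, v i) - Real.log (∏ i, w i)
      ≤ (∑ i, (v i - w i)) / δ := by
    rw [Real.log_prod (fun i _ => ne_of_gt (hvpos i)),
      Real.log_prod (fun i _ => ne_of_gt (hwpos i)),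
      ← Finset.sum_sub_distrib, Finset.sum_div]
    apply Finset.sum_le_sum
    intro i _
    have hdiv : Real.log (v i / w i) ≤ v i / w i - 1 :=
      Real.log_le_sub_one_of_pos (div_pos (hvpos i) (hwpos i))
    rw [Real.log_div (ne_of_gt (hvpos i)) (ne_of_gt (hwpos i))] at hdiv
    rw [div_sub_one (ne_of_gt (hwpos i))] at hdiv
    refine hdiv.trans (div_le_div_of_nonneg_left ?_ hδ (hwmin i))
    linarith [hvw i]
  have key1 : δ * Real.log (β / α) < ∑ i, (v i - w i) := by
    have := hlog.trans_le hsum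
    rw [lt_div_iff₀ hδ] at this
    linarith [this]
  -- step 2 : ∑ (v i - w i) ≤ √(n) * ‖v - w‖
  have hnormsq : ‖v - w‖ = Real.sqrt (∑ i, (v i - w i) ^ 2) := by
    rw [EuclideanSpace.norm_eq]
    congr 1
    apply Finset.sum_congr rfl
    intro i _
    rw [Real.norm_eq_abs, sq_abs]
    rfl
  have hsumnn : 0 ≤ ∑ i, (v i - w i) := Finset.sum_nonneg fun i _ => by
    linarith [hvw i]
  have key2 : ∑ i, (v i - w i) ≤ Real.sqrt ((k:ℝ) - 1) * ‖v - w‖ := by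
    rw [hnormsq, hkn, ← Real.sqrt_mul (le_of_lt hnpos)]
    rw [← Real.sqrt_sq hsumnn]
    apply Real.sqrt_le_sqrt
    have := sq_sum_le_card_mul_sum_sq (s := (Finset.univ : Finset (Fin (k-1))))
      (f := fun i => v i - w i)
    simpa using this
  rw [div_mul_eq_mul_div, div_lt_iff₀ hsq]
  calc δ * Real.log (β / α) < ∑ i, (v i - w i) := key1
    _ ≤ Real.sqrt ((k:ℝ) - 1) * ‖v - w‖ := key2
    _ = ‖v - w‖ * Real.sqrt ((k:ℝ) - 1) := mul_comm _ _
end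

section
/- Consider gradient descent on F(w) = (1/2)(∏_{i=1}^k w_i − y)^2 with step size η > 0, i.e., w_j(t+1) = w_j(t) − η(∏_i w_i(t) − y)∏_{i≠j} w_i(t). Fix indices j, j' and iteration t, and suppose w_j(t) ≤ w_{j'}(t), min_i w_i(t) ≥ 0, and y < 0. Then w_{j'}(t) − w_j(t) ≤ w_{j'}(t+1) − w_j(t+1), i.e., the gap between coordinates is non-decreasing under one gradient step. -/
open Finset

/-- Gap monotonicity for gradient descent on `F w = (1/2) (∏ i, w i − y)²` with `y < 0`:
if `w_j t ≤ w_{j'} t` and all coordinates at time `t` are nonnegative, then one gradient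
step does not decrease the gap `w_{j'} − w_j`. -/
theorem stmt_8 (k : ℕ) (y η : ℝ) (hη : 0 < η) (hy : y < 0)
    (w : ℕ → Fin k → ℝ) (t : ℕ)
    (hupdate : ∀ i, w (t + 1) i
      = w t i - η * ((∏ l, w t l) - y) * ∏ l ∈ univ.erase i, w t l)
    (j j' : Fin k) (hjj : w t j ≤ w t j') (hpos : ∀ i, 0 ≤ w t i) :
    w t j' - w t j ≤ w (t + 1) j' - w (t + 1) j := by
  rcases eq_or_ne j j' with rfl | hne
  · simp
  · have hj'mem : j ∈ univ.erase j' := by simp [hne]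
    have hjmem : j' ∈ univ.erase j := by simp [Ne.symm hne]
    have h1 : w t j * ∏ l ∈ (univ.erase j').erase j, w t l
        = ∏ l ∈ univ.erase j', w t l := Finset.mul_prod_erase _ _ hj'mem
    have h2 : w t j' * ∏ l ∈ (univ.erase j).erase j', w t l
        = ∏ l ∈ univ.erase j, w t l := Finset.mul_prod_erase _ _ hjmem
    have hcomm : (univ.erase j').erase j = (univ.erase j).erase j' :=
      Finset.erase_right_comm
    rw [hcomm] at h1
    set R := ∏ l ∈ (univ.erase j).erase j', w t l with hR
    have hRnn : 0 ≤ R := Finset.prod_nonneg fun i _ => hpos i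
    have hPnn : 0 ≤ ∏ l, w t l := Finset.prod_nonneg fun i _ => hpos i
    have hPy : 0 < (∏ l, w t l) - y := by linarith
    rw [hupdate j, hupdate j', ← h1, ← h2]
    nlinarith [mul_nonneg hη.le (mul_nonneg hPy.le (mul_nonneg (sub_nonneg.mpr hjj) hRnn))]
end

section
/- Polyak–Łojasiewicz-type inequality: Let F(w) = (1/2)(∏_{i=1}^k w_i − y)^2 with y > 0, and let δ, γ > 0. If w ∈ ℝ^k satisfies min_i w_i ≥ δ and w_j ≥ γ for all j except possibly one coordinate, then ‖∇F(w)‖² ≥ 2k δ² γ^{2(k−2)} F(w). -/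
open Finset

/-- Polyak–Łojasiewicz-type inequality for `F w = (1/2)(∏ i, w i − y)²` with `y > 0`:
if `min_i w_i ≥ δ` and `w_j ≥ γ` for all `j` except possibly one coordinate `j₀`
(`γ ≥ δ > 0`, `k ≥ 2`), then `‖∇F(w)‖² ≥ 2 k δ² γ^(2(k−2)) F(w)`. -/
theorem stmt_10 (k : ℕ) (hk : 2 ≤ k) (y δ γ : ℝ) (hy : 0 < y)
    (hδ : 0 < δ) (hγδ : δ ≤ γ) (w : Fin k → ℝ)
    (hmin : ∀ i, δ ≤ w i) (j₀ : Fin k) (hγ : ∀ j, j ≠ j₀ → γ ≤ w j) :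
    2 * k * δ ^ 2 * γ ^ (2 * (k - 2)) * ((1 / 2) * ((∏ i, w i) - y) ^ 2)
      ≤ ∑ j, (((∏ i, w i) - y) * ∏ i ∈ univ.erase j, w i) ^ 2 := by
  have hγ0 : (0:ℝ) < γ := lt_of_lt_of_le hδ hγδ
  have hkey : ∀ j : Fin k, δ * γ ^ (k - 2) ≤ ∏ i ∈ univ.erase j, w i := by
    intro j
    by_cases hj : j = j₀
    · subst hj
      have h1 : γ ^ (k - 1) ≤ ∏ i ∈ univ.erase j, w i := by
        calc γ ^ (k - 1) = ∏ _i ∈ univ.erase j, γ := by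
              rw [Finset.prod_const, Finset.card_erase_of_mem (mem_univ _),
                Finset.card_univ, Fintype.card_fin]
          _ ≤ _ := Finset.prod_le_prod (fun i _ => hγ0.le)
              (fun i hi => hγ i (Finset.ne_of_mem_erase hi))
      have h2 : δ * γ ^ (k - 2) ≤ γ ^ (k - 1) := by
        have : k - 1 = (k - 2) + 1 := by omega
        rw [this, pow_succ]
        nlinarith [pow_pos hγ0 (k - 2)]
      linarith
    · have hmem : j₀ ∈ univ.erase j := Finset.mem_erase.2 ⟨Ne.symm hj, mem_univ _⟩
      rw [← Finset.mul_prod_erase _ _ hmem]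
      have h1 : γ ^ (k - 2) ≤ ∏ i ∈ (univ.erase j).erase j₀, w i := by
        calc γ ^ (k - 2) = ∏ _i ∈ (univ.erase j).erase j₀, γ := by
              rw [Finset.prod_const, Finset.card_erase_of_mem hmem,
                Finset.card_erase_of_mem (mem_univ _), Finset.card_univ, Fintype.card_fin,
                show k - 1 - 1 = k - 2 from by omega]
          _ ≤ _ := Finset.prod_le_prod (fun i _ => hγ0.le)
              (fun i hi => hγ i (Finset.ne_of_mem_erase hi))
      exact mul_le_mul (hmin j₀) h1 (pow_pos hγ0 _).le (le_trans hδ.le (hmin j₀))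
  have hsq : ∀ j : Fin k, δ ^ 2 * γ ^ (2 * (k - 2)) ≤ (∏ i ∈ univ.erase j, w i) ^ 2 := by
    intro j
    have : δ ^ 2 * γ ^ (2 * (k - 2)) = (δ * γ ^ (k - 2)) ^ 2 := by
      rw [mul_pow, ← pow_mul]; ring_nf
    rw [this]
    exact pow_le_pow_left₀ (by positivity) (hkey j) 2
  have hmain : ∑ _j : Fin k, ((∏ i, w i) - y) ^ 2 * (δ ^ 2 * γ ^ (2 * (k - 2)))
      ≤ ∑ j, (((∏ i, w i) - y) * ∏ i ∈ univ.erase j, w i) ^ 2 := by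
    refine Finset.sum_le_sum fun j _ => ?_
    rw [mul_pow]
    exact mul_le_mul_of_nonneg_left (hsq j) (sq_nonneg _)
  rw [Finset.sum_const, Finset.card_univ, Fintype.card_fin, nsmul_eq_mul] at hmain
  linarith [hmain]
end

section
/- Invariance of the region under a gradient step: Let F(w) = (1/2)(∏_i w_i − y)^2 with y > 0, δ > 0, and suppose w ∈ ℝ^k satisfies 0 ≤ ∏_i w_i < y and min_i w_i ≥ δ. If the step size satisfies 0 < η ≤ δ²/(k y²), then the gradient step w' = w − η∇F(w) satisfies w'_i ≥ w_i for all i (in particular min_i w'_i ≥ δ) and ∏_i w'_i < y. -/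
open Finset

/-- Invariance of the region under a gradient step for `F w = (1/2)(∏ i, w i − y)²` with
`y > 0`: if `0 ≤ ∏ i, w i < y`, `min_i w_i ≥ δ > 0` and `0 < η ≤ δ² / (k y²)`, then the
gradient step `w'_j = w_j + η (y − ∏ i, w i) ∏_{i ≠ j} w_i` satisfies `w'_i ≥ w_i` for all
`i` and `∏ i, w'_i < y`. -/
theorem stmt_12 (k : ℕ) (hk : 0 < k) (y δ η : ℝ) (hy : 0 < y) (hδ : 0 < δ)
    (w w' : Fin k → ℝ) (hprod0 : 0 ≤ ∏ i, w i) (hprody : ∏ i, w i < y)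
    (hmin : ∀ i, δ ≤ w i) (hη : 0 < η) (hη2 : η ≤ δ ^ 2 / (k * y ^ 2))
    (hstep : ∀ j, w' j = w j + η * (y - ∏ i, w i) * ∏ i ∈ univ.erase j, w i) :
    (∀ i, w i ≤ w' i) ∧ ∏ i, w' i < y := by
  have hwpos : ∀ i, 0 < w i := fun i => lt_of_lt_of_le hδ (hmin i)
  have hP : 0 < ∏ i, w i := Finset.prod_pos (fun i _ => hwpos i)
  set P : ℝ := ∏ i, w i with hPdef
  have hyP : 0 < y - P := by linarith
  have hPj : ∀ j : Fin k, 0 < ∏ i ∈ univ.erase j, w i :=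
    fun j => Finset.prod_pos (fun i _ => hwpos i)
  have hPeq : ∀ j : Fin k, w j * ∏ i ∈ univ.erase j, w i = P :=
    fun j => Finset.mul_prod_erase univ w (Finset.mem_univ j)
  have hstep0 : ∀ j : Fin k, 0 ≤ η * (y - P) * ∏ i ∈ univ.erase j, w i :=
    fun j => mul_nonneg (mul_nonneg hη.le hyP.le) (hPj j).le
  have hmono : ∀ i, w i ≤ w' i := by
    intro j
    rw [hstep j]
    linarith [hstep0 j]
  refine ⟨hmono, ?_⟩
  set t : Fin k → ℝ := fun j => η * (y - P) * P / (w j) ^ 2 with ht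
  have ht0 : ∀ j, 0 ≤ t j := by
    intro j
    exact div_nonneg (mul_nonneg (mul_nonneg hη.le hyP.le) hP.le) (by positivity)
  have hw' : ∀ j, w' j = w j * (1 + t j) := by
    intro j
    rw [hstep j]
    have hwj := (hwpos j).ne'
    have he : (∏ i ∈ univ.erase j, w i) = P / w j := by
      rw [eq_div_iff hwj, mul_comm]; exact hPeq j
    simp only [ht, he]
    field_simp
  have htle : ∀ j, t j ≤ η * (y - P) * P / δ ^ 2 := by
    intro j
    have hwj := hwpos j
    have hmj := hmin j
    simp only [ht]
    rw [div_le_div_iff₀ (by positivity) (by positivity)]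
    have hnum : 0 ≤ η * (y - P) * P := mul_nonneg (mul_nonneg hη.le hyP.le) hP.le
    have hsq : δ ^ 2 ≤ w j ^ 2 := by nlinarith
    exact mul_le_mul_of_nonneg_left hsq hnum
  have hkpos : (0 : ℝ) < k := by exact_mod_cast hk
  have hsum : ∑ j, t j ≤ (y - P) * P / y ^ 2 := by
    have h1 : ∑ j, t j ≤ (k : ℝ) * (η * (y - P) * P / δ ^ 2) := by
      calc ∑ j, t j ≤ ∑ _j : Fin k, (η * (y - P) * P / δ ^ 2) :=
            Finset.sum_le_sum (fun j _ => htle j)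
        _ = (k : ℝ) * (η * (y - P) * P / δ ^ 2) := by
            simp [Finset.sum_const, Finset.card_univ]
    have hηle : (k : ℝ) * η ≤ δ ^ 2 / y ^ 2 := by
      calc (k:ℝ) * η ≤ (k:ℝ) * (δ ^ 2 / (k * y ^ 2)) :=
            mul_le_mul_of_nonneg_left hη2 hkpos.le
        _ = δ ^ 2 / y ^ 2 := by field_simp
    calc ∑ j, t j ≤ (k : ℝ) * (η * (y - P) * P / δ ^ 2) := h1
      _ = ((k:ℝ) * η) * ((y - P) * P / δ ^ 2) := by ring
      _ ≤ (δ ^ 2 / y ^ 2) * ((y - P) * P / δ ^ 2) :=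
          mul_le_mul_of_nonneg_right hηle (by positivity)
      _ = (y - P) * P / y ^ 2 := by field_simp
  have hprodw' : ∏ i, w' i = P * ∏ j, (1 + t j) := by
    rw [hPdef, ← Finset.prod_mul_distrib]
    exact Finset.prod_congr rfl (fun j _ => hw' j)
  have hexp : ∏ j, (1 + t j) ≤ Real.exp (∑ j, t j) := by
    rw [Real.exp_sum]
    apply Finset.prod_le_prod
    · intro j _; linarith [ht0 j]
    · intro j _
      have := Real.add_one_le_exp (t j)
      linarith
  have hfinal : P * Real.exp ((y - P) * P / y ^ 2) < y := by
    have hlog : Real.log (P / y) ≤ P / y - 1 := Real.log_le_sub_one_of_pos (by positivity)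
    have hlogyP : 1 - P / y ≤ Real.log (y / P) := by
      have h5 : Real.log (y / P) = - Real.log (P / y) := by
        rw [← Real.log_inv]
        congr 1
        rw [inv_div]
      rw [h5]; linarith
    have h2 : P / y < 1 := (div_lt_one hy).2 hprody
    have hs : (y - P) * P / y ^ 2 < 1 - P / y := by
      have heq : (y - P) * P / y ^ 2 = ((y - P)/y) * (P / y) := by
        field_simp
      have h3 : 0 < (y - P)/y := by positivity
      have h4 : (y - P)/y + P/y = 1 := by field_simp; ring
      rw [heq]
      nlinarith [mul_lt_mul_of_pos_left h2 h3]
    have hlt : Real.exp ((y - P) * P / y ^ 2) < y / P := by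
      calc Real.exp ((y - P) * P / y ^ 2) < Real.exp (1 - P / y) := Real.exp_lt_exp.2 hs
        _ ≤ Real.exp (Real.log (y / P)) := Real.exp_le_exp.2 hlogyP
        _ = y / P := Real.exp_log (by positivity)
    calc P * Real.exp ((y - P) * P / y ^ 2) < P * (y / P) :=
          mul_lt_mul_of_pos_left hlt hP
      _ = y := by field_simp
  have hexp2 : Real.exp (∑ j, t j) ≤ Real.exp ((y - P) * P / y ^ 2) :=
    Real.exp_le_exp.2 hsum
  calc ∏ i, w' i = P * ∏ j, (1 + t j) := hprodw'
    _ ≤ P * Real.exp (∑ j, t j) := mul_le_mul_of_nonneg_left hexp hP.le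
    _ ≤ P * Real.exp ((y - P) * P / y ^ 2) := mul_le_mul_of_nonneg_left hexp2 hP.le
    _ < y := hfinal
end

section
/- Two-point example: for F(w₁, w₂) = (w₁w₂ + 1)², gradient descent initialized at any point with w₁(1) = w₂(1) = a > 0 with sufficiently small step size maintains w₁(t) = w₂(t) for all t, and if it converges, it converges to the saddle point (0,0) where F = 1, which is suboptimal (inf F = 0). -/
open Filter

/-- Two-point example: for `F (w₁, w₂) = (w₁ w₂ + 1)²`, gradient descent initialized at any
point with `w₁(1) = w₂(1) = a > 0` with sufficiently small step size maintains
`w₁(t) = w₂(t)` for all `t ≥ 1`, and if it converges, it converges to the saddle point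
`(0, 0)`, where `F = 1` is suboptimal: `inf F = 0`. -/
theorem stmt_17 (F : ℝ × ℝ → ℝ) (hF : ∀ p : ℝ × ℝ, F p = (p.1 * p.2 + 1) ^ 2)
    (a : ℝ) (ha : 0 < a) :
    ∃ η₀ > (0 : ℝ), ∀ η : ℝ, 0 < η → η ≤ η₀ →
      ∀ w : ℕ → ℝ × ℝ, w 1 = (a, a) →
        (∀ t, (w (t + 1)).1 = (w t).1 - η * (2 * ((w t).1 * (w t).2 + 1) * (w t).2)) →
        (∀ t, (w (t + 1)).2 = (w t).2 - η * (2 * ((w t).1 * (w t).2 + 1) * (w t).1)) →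
        (∀ t, 1 ≤ t → (w t).1 = (w t).2) ∧
          (∀ l : ℝ × ℝ, Tendsto w atTop (nhds l) → l = (0, 0)) ∧
          F (0, 0) = 1 ∧ sInf (Set.range F) = 0 := by
  refine ⟨1, one_pos, ?_⟩
  intro η hη _ w hw1 h1 h2
  have hsym : ∀ t, 1 ≤ t → (w t).1 = (w t).2 := by
    intro t ht
    induction t with
    | zero => omega
    | succ n ih =>
      rcases Nat.lt_or_ge n 1 with h | h
      · interval_cases n
        simp [hw1]
      · have := ih h
        rw [h1 n, h2 n, this]
  refine ⟨hsym, ?_, by simp [hF], ?_⟩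
  · intro l hl
    have hl1 : Tendsto (fun t => (w t).1) atTop (nhds l.1) :=
      (continuous_fst.tendsto l).comp hl
    have hl2 : Tendsto (fun t => (w t).2) atTop (nhds l.2) :=
      (continuous_snd.tendsto l).comp hl
    have heq : l.1 = l.2 := by
      refine tendsto_nhds_unique (hl1.congr' ?_) hl2
      filter_upwards [eventually_ge_atTop 1] with t ht
      exact hsym t ht
    have hshift1 : Tendsto (fun t => (w (t + 1)).1) atTop (nhds l.1) :=
      hl1.comp (tendsto_add_atTop_nat 1)
    have hcomb : Tendsto (fun t => (w t).1 - η * (2 * ((w t).1 * (w t).2 + 1) * (w t).2))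
        atTop (nhds (l.1 - η * (2 * (l.1 * l.2 + 1) * l.2))) :=
      hl1.sub (tendsto_const_nhds.mul ((((hl1.mul hl2).add tendsto_const_nhds).const_mul 2).mul hl2))
    have hkey : l.1 - η * (2 * (l.1 * l.2 + 1) * l.2) = l.1 := by
      refine tendsto_nhds_unique hcomb ?_
      refine hshift1.congr ?_
      intro t
      exact h1 t
    have hl0 : l.1 = 0 := by
      rw [← heq] at hkey
      have h0 : η * (2 * (l.1 * l.1 + 1) * l.1) = 0 := by linarith
      have h0' : 2 * (l.1 * l.1 + 1) * l.1 = 0 :=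
        (mul_eq_zero.mp h0).resolve_left (ne_of_gt hη)
      nlinarith [sq_nonneg l.1]
    have : l.2 = 0 := by rw [← heq]; exact hl0
    exact Prod.ext hl0 this
  · have h0 : (0 : ℝ) ∈ Set.range F := ⟨(-1, 1), by simp [hF]⟩
    have hlb : ∀ x ∈ Set.range F, (0 : ℝ) ≤ x := by
      rintro x ⟨p, rfl⟩
      rw [hF]
      positivity
    exact le_antisymm (csInf_le ⟨0, hlb⟩ h0) (le_csInf ⟨0, h0⟩ hlb)
end
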